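/- Let K ∈ ℕ, η > 0, E ∈ ℝ, g_j > 0 and γ_j > 0 for j = 1,…,K. Let V be the (K+1)×(K+1) complex Hermitian matrix with entries V_{00} = ((η/2)/(1 + (η/2)²)) E, V_{0j} = (η/2)/(2(1 + iη/2)) · g_j and V_{j0} = conjugate of V_{0j} for j = 1,…,K, V_{jj} = γ_j/2 for j = 1,…,K, and V_{jk} = 0 for distinct j,k ≥ 1. Then V is positive semidefinite if and only if E ≥ (η/4) Σ_{j=1}^K g_j²/γ_j. -/

import Mathlib

open Matrix
open scoped ComplexOrder

/-!
The pseudomode block `diagonal (γ / 2)` is positive definite, so by the Schur complement `V` is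
positive semidefinite iff the `1 × 1` complement `V₀₀ - ∑ⱼ |V₀ⱼ|² / Vⱼⱼ` is nonnegative. Since
`|V₀ⱼ|² = (η/2)² gⱼ² / (4 (1 + (η/2)²))`, that complement equals
`(η/2) / (1 + (η/2)²) · (E - (η/4) ∑ⱼ gⱼ² / γⱼ)`, and the prefactor is positive.
-/

/-- The optical potential block `V_α`: the `(K+1)×(K+1)` Hermitian matrix with
`V_00 = ((η/2)/(1+(η/2)²))E`, `V_{0j} = (η/2)/(2(1+iη/2))·g_j`, `V_{j0} = conj V_{0j}`,
`V_{jj} = γ_j/2`, and vanishing off-diagonal entries among the pseudomodes. -/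
noncomputable def Vblock (K : ℕ) (η E : ℝ) (g γ : Fin K → ℝ) :
    Matrix (Unit ⊕ Fin K) (Unit ⊕ Fin K) ℂ :=
  Matrix.fromBlocks
    (fun _ _ => (((η / 2) / (1 + (η / 2) ^ 2) * E : ℝ) : ℂ))
    (fun _ j => (η / 2 : ℂ) / (2 * (1 + Complex.I * (η : ℂ) / 2)) * (g j : ℂ))
    (fun j _ => (starRingEnd ℂ) ((η / 2 : ℂ) / (2 * (1 + Complex.I * (η : ℂ) / 2)) * (g j : ℂ)))
    (Matrix.diagonal fun j => ((γ j / 2 : ℝ) : ℂ))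

namespace Matrix

variable {𝕜 n : Type*} [RCLike 𝕜] [Fintype n] [DecidableEq n]

theorem posSemidef_fromBlocks_unit_diagonal_iff (a : ℝ) (b : n → 𝕜) (d : n → ℝ)
    (hd : ∀ j, 0 < d j) :
    (fromBlocks (of fun _ _ => (a : 𝕜)) (replicateRow Unit b) (replicateRow Unit b)ᴴ
      (diagonal fun j => (d j : 𝕜))).PosSemidef ↔ ∑ j, ‖b j‖ ^ 2 / d j ≤ a := by
  have hD : (diagonal fun j => (d j : 𝕜)).PosDef :=
    posDef_diagonal_iff.mpr fun j => RCLike.ofReal_pos.mpr (hd j)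
  have := hD.isUnit.invertible
  have hDinv : (diagonal fun j => (d j : 𝕜))⁻¹ = diagonal fun j => ((d j)⁻¹ : 𝕜) := by
    refine inv_eq_right_inv ?_
    rw [diagonal_mul_diagonal, ← diagonal_one]
    congr! with j
    exact mul_inv_cancel₀ (RCLike.ofReal_ne_zero.mpr (hd j).ne')
  have hschur : of (fun _ _ => (a : 𝕜)) - replicateRow Unit b *
      (diagonal fun j => (d j : 𝕜))⁻¹ * (replicateRow Unit b)ᴴ =
      diagonal fun _ => ((a - ∑ j, ‖b j‖ ^ 2 / d j : ℝ) : 𝕜) := by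
    ext ⟨⟩ ⟨⟩
    rw [hDinv, sub_apply, mul_apply]
    simp only [of_apply, mul_diagonal, replicateRow_apply, conjTranspose_apply,
      diagonal_apply_eq, RCLike.star_def]
    push_cast
    congr 1
    refine Finset.sum_congr rfl fun j _ => ?_
    rw [← RCLike.mul_conj]
    ring
  rw [PosDef.fromBlocks₂₂ _ _ hD, hschur, posSemidef_diagonal_iff]
  simp only [RCLike.ofReal_nonneg, sub_nonneg, forall_const]

end Matrix

theorem sq_norm_coupling_prefactor (η : ℝ) :
    ‖(η / 2 : ℂ) / (2 * (1 + Complex.I * η / 2))‖ ^ 2 = (η / 2) ^ 2 / (4 * (1 + (η / 2) ^ 2)) := by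
  rw [norm_div, div_pow, Complex.sq_norm, Complex.sq_norm]
  simp [Complex.normSq_apply]
  ring

theorem optical_potential_block_posSemidef_iff_general
    (K : ℕ) (η E : ℝ) (hη : 0 < η) (g γ : Fin K → ℝ)
    (hγ : ∀ j, 0 < γ j) :
    (Vblock K η E g γ).PosSemidef ↔ E ≥ (η / 4) * ∑ j, (g j) ^ 2 / (γ j) := by
  set c : ℂ := (η / 2 : ℂ) / (2 * (1 + Complex.I * (η : ℂ) / 2))
  refine (posSemidef_fromBlocks_unit_diagonal_iff (𝕜 := ℂ) ((η / 2) / (1 + (η / 2) ^ 2) * E)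
    (fun j => c * g j) (fun j => γ j / 2) fun j => half_pos (hγ j)).trans ?_
  have hk : 0 < (η / 2) / (1 + (η / 2) ^ 2) := by positivity
  have hsum : ∑ j, ‖c * g j‖ ^ 2 / (γ j / 2) =
      (η / 2) / (1 + (η / 2) ^ 2) * ((η / 4) * ∑ j, g j ^ 2 / γ j) := by
    simp only [norm_mul, mul_pow, c, sq_norm_coupling_prefactor, Complex.norm_real,
      Real.norm_eq_abs, sq_abs, Finset.mul_sum]
    refine Finset.sum_congr rfl fun j _ => ?_
    field_simp
  rw [hsum, ge_iff_le]
  exact mul_le_mul_iff_right₀ hk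

/-- The optical potential block `V` is positive semidefinite if and only if
`E ≥ (η/4) Σ_j g_j²/γ_j`. -/
theorem optical_potential_block_posSemidef_iff
    (K : ℕ) (η E : ℝ) (hη : 0 < η) (g γ : Fin K → ℝ)
    (hg : ∀ j, 0 < g j) (hγ : ∀ j, 0 < γ j) :
    (Vblock K η E g γ).PosSemidef ↔ E ≥ (η / 4) * ∑ j, (g j) ^ 2 / (γ j) :=
  optical_potential_block_posSemidef_iff_general K η E hη g γ hγ
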